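/- arXiv:1110.2933 — 2 statements merged into one kernel-verified Lean document; each statement's English description precedes it below -/
import Mathlib

section
/- Every finite simple graph that is not complete contains two non-adjacent good vertices. -/
namespace CompKim

open SimpleGraph

variable {V : Type*}



/-- `s` is the vertex set of an induced cycle (possibly a triangle) of `G`. -/
def IsInducedCycleOn (G : SimpleGraph V) (s : Set V) : Prop :=
  ∃ (v : V) (c : G.Walk v v), c.IsCycle ∧ c.toSubgraph.IsInduced ∧ c.toSubgraph.verts = s

/-- A vertex is good if every two distinct non-adjacent neighbors lie with it on an
induced cycle. -/
def IsGood (G : SimpleGraph V) (v : V) : Prop :=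
  ∀ u u' : V, u ≠ u' → G.Adj v u → G.Adj v u' → ¬ G.Adj u u' →
    ∃ s : Set V, IsInducedCycleOn G s ∧ v ∈ s ∧ u ∈ s ∧ u' ∈ s

/-! ### Walks within a vertex set -/

/-- There is a walk from `x` to `y` all of whose vertices lie in `t`. -/
def WIn (G : SimpleGraph V) (t : Set V) (x y : V) : Prop :=
  ∃ p : G.Walk x y, ∀ z ∈ p.support, z ∈ t

lemma WIn.refl {G : SimpleGraph V} {t : Set V} {x : V} (hx : x ∈ t) : WIn G t x x :=
  ⟨Walk.nil, by simp [hx]⟩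

lemma WIn.mem_left {G : SimpleGraph V} {t : Set V} {x y : V} (h : WIn G t x y) : x ∈ t := by
  obtain ⟨p, hp⟩ := h; exact hp x p.start_mem_support

lemma WIn.mem_right {G : SimpleGraph V} {t : Set V} {x y : V} (h : WIn G t x y) : y ∈ t := by
  obtain ⟨p, hp⟩ := h; exact hp y p.end_mem_support

lemma WIn.symm {G : SimpleGraph V} {t : Set V} {x y : V} (h : WIn G t x y) : WIn G t y x := by
  obtain ⟨p, hp⟩ := h
  exact ⟨p.reverse, by intro z hz; rw [Walk.support_reverse, List.mem_reverse] at hz; exact hp z hz⟩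

lemma WIn.trans {G : SimpleGraph V} {t : Set V} {x y z : V} (h : WIn G t x y)
    (h' : WIn G t y z) : WIn G t x z := by
  obtain ⟨p, hp⟩ := h
  obtain ⟨q, hq⟩ := h'
  refine ⟨p.append q, fun w hw => ?_⟩
  rw [Walk.mem_support_append_iff] at hw
  exact hw.elim (hp w) (hq w)

lemma WIn.mono {G : SimpleGraph V} {t t' : Set V} (h : t ⊆ t') {x y : V} (hw : WIn G t x y) :
    WIn G t' x y := by
  obtain ⟨p, hp⟩ := hw; exact ⟨p, fun z hz => h (hp z hz)⟩

lemma WIn.of_adj {G : SimpleGraph V} {t : Set V} {x y : V} (h : G.Adj x y) (hx : x ∈ t)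
    (hy : y ∈ t) : WIn G t x y :=
  ⟨Walk.cons h Walk.nil, by simp [hx, hy]⟩

lemma not_wIn_pair {G : SimpleGraph V} {a b : V} (hab : a ≠ b) (hadj : ¬ G.Adj a b) :
    ¬ WIn G {a, b} a b := by
  rintro ⟨p, hp⟩
  cases p with
  | nil => exact hab rfl
  | @cons _ y _ h q =>
    have hy : y ∈ ({a, b} : Set V) := hp y (by simp)
    rcases hy with rfl | rfl
    · exact G.irrefl h
    · exact hadj h

/-! ### Minimal walks are induced paths -/

lemma edge_mem_of_length_one {G : SimpleGraph V} {x y : V} {p : G.Walk x y}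
    (h : p.length = 1) : s(x, y) ∈ p.edges := by
  match p with
  | .nil => simp at h
  | .cons (v := w) h' q =>
    have hq : q.length = 0 := by simpa using h
    have := q.eq_of_length_eq_zero hq
    subst this
    simp

lemma exists_min_walk {G : SimpleGraph V} {t : Set V} {u u' : V} (h : WIn G t u u') :
    ∃ p : G.Walk u u', (∀ z ∈ p.support, z ∈ t) ∧ p.IsPath ∧
      ∀ q : G.Walk u u', (∀ z ∈ q.support, z ∈ t) → p.length ≤ q.length := by
  classical
  obtain ⟨p0, hp0⟩ := h
  set K : Set ℕ := {k | ∃ p : G.Walk u u', (∀ z ∈ p.support, z ∈ t) ∧ p.length = k} with hK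
  have hne : K.Nonempty := ⟨p0.length, p0, hp0, rfl⟩
  obtain ⟨p1, hp1, hlen⟩ := Nat.sInf_mem hne
  refine ⟨p1.bypass, fun z hz => hp1 z (p1.support_bypass_subset hz), p1.bypass_isPath,
    fun q hq => ?_⟩
  calc p1.bypass.length ≤ p1.length := p1.length_bypass_le
    _ ≤ q.length := by rw [hlen]; exact Nat.sInf_le ⟨q, hq, rfl⟩

lemma helper_right [DecidableEq V] {G : SimpleGraph V} {t : Set V} {c d x y : V}
    (adj : G.Adj x y) (p1 : G.Walk c x) (p2 : G.Walk x d) (hy : y ∈ p2.support)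
    (ht1 : ∀ z ∈ p1.support, z ∈ t) (ht2 : ∀ z ∈ p2.support, z ∈ t)
    (hmin : ∀ q : G.Walk c d, (∀ z ∈ q.support, z ∈ t) → p1.length + p2.length ≤ q.length) :
    s(x, y) ∈ p2.edges := by
  set q : G.Walk c d := p1.append (Walk.cons adj (p2.dropUntil y hy)) with hq
  have hqt : ∀ z ∈ q.support, z ∈ t := by
    intro z hz
    rw [hq, Walk.mem_support_append_iff] at hz
    rcases hz with hz | hz
    · exact ht1 z hz
    · rw [Walk.support_cons] at hz
      rcases List.mem_cons.mp hz with rfl | hz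
      · exact ht2 z (p2.start_mem_support)
      · exact ht2 z (p2.support_dropUntil_subset hy hz)
  have hlq : q.length = p1.length + (1 + (p2.dropUntil y hy).length) := by
    rw [hq, Walk.length_append, Walk.length_cons]
    omega
  have hsplit : (p2.takeUntil y hy).length + (p2.dropUntil y hy).length = p2.length := by
    have := congrArg Walk.length (p2.take_spec hy)
    rwa [Walk.length_append] at this
  have h1 : (p2.takeUntil y hy).length ≤ 1 := by
    have := hmin q hqt
    omega
  interval_cases h : (p2.takeUntil y hy).length
  · exact absurd ((p2.takeUntil y hy).eq_of_length_eq_zero h) adj.ne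
  · exact p2.edges_takeUntil_subset hy (edge_mem_of_length_one h)

lemma helper_left [DecidableEq V] {G : SimpleGraph V} {t : Set V} {c d x y : V}
    (adj : G.Adj x y) (p1 : G.Walk c x) (p2 : G.Walk x d) (hy : y ∈ p1.support)
    (ht1 : ∀ z ∈ p1.support, z ∈ t) (ht2 : ∀ z ∈ p2.support, z ∈ t)
    (hmin : ∀ q : G.Walk c d, (∀ z ∈ q.support, z ∈ t) → p1.length + p2.length ≤ q.length) :
    s(x, y) ∈ p1.edges := by
  set q : G.Walk c d := (p1.takeUntil y hy).append (Walk.cons adj.symm p2) with hq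
  have hqt : ∀ z ∈ q.support, z ∈ t := by
    intro z hz
    rw [hq, Walk.mem_support_append_iff] at hz
    rcases hz with hz | hz
    · exact ht1 z (p1.support_takeUntil_subset hy hz)
    · rw [Walk.support_cons] at hz
      rcases List.mem_cons.mp hz with rfl | hz
      · exact ht1 z hy
      · exact ht2 z hz
  have hlq : q.length = (p1.takeUntil y hy).length + (1 + p2.length) := by
    rw [hq, Walk.length_append, Walk.length_cons]
    omega
  have hsplit : (p1.takeUntil y hy).length + (p1.dropUntil y hy).length = p1.length := by
    have := congrArg Walk.length (p1.take_spec hy)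
    rwa [Walk.length_append] at this
  have h1 : (p1.dropUntil y hy).length ≤ 1 := by
    have := hmin q hqt
    omega
  rw [Sym2.eq_swap]
  interval_cases h : (p1.dropUntil y hy).length
  · exact absurd ((p1.dropUntil y hy).eq_of_length_eq_zero h).symm adj.ne
  · exact p1.edges_dropUntil_subset hy (edge_mem_of_length_one h)

lemma exists_induced_path {G : SimpleGraph V} {t : Set V} {u u' : V} (h : WIn G t u u') :
    ∃ p : G.Walk u u', (∀ z ∈ p.support, z ∈ t) ∧ p.IsPath ∧
      ∀ x y, G.Adj x y → x ∈ p.support → y ∈ p.support → s(x, y) ∈ p.edges := by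
  classical
  obtain ⟨p, hpt, hpath, hmin⟩ := exists_min_walk h
  refine ⟨p, hpt, hpath, fun x y adj hx hy => ?_⟩
  have hy' : y ∈ ((p.takeUntil x hx).append (p.dropUntil x hx)).support := by
    rw [p.take_spec hx]; exact hy
  rw [Walk.mem_support_append_iff] at hy'
  have hmin' : ∀ q : G.Walk u u', (∀ z ∈ q.support, z ∈ t) →
      (p.takeUntil x hx).length + (p.dropUntil x hx).length ≤ q.length := by
    intro q hq
    have := congrArg Walk.length (p.take_spec hx)
    rw [Walk.length_append] at this
    rw [this]
    exact hmin q hq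
  have ht1 : ∀ z ∈ (p.takeUntil x hx).support, z ∈ t :=
    fun z hz => hpt z (p.support_takeUntil_subset hx hz)
  have ht2 : ∀ z ∈ (p.dropUntil x hx).support, z ∈ t :=
    fun z hz => hpt z (p.support_dropUntil_subset hx hz)
  rcases hy' with hy' | hy'
  · have := helper_left adj (p.takeUntil x hx) (p.dropUntil x hx) hy' ht1 ht2 hmin'
    exact p.edges_takeUntil_subset hx this
  · have := helper_right adj (p.takeUntil x hx) (p.dropUntil x hx) hy' ht1 ht2 hmin'
    exact p.edges_dropUntil_subset hx this




lemma walk_toSubgraph_adj_iff {G : SimpleGraph V} {a b x y : V} (c : G.Walk a b) :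
    c.toSubgraph.Adj x y ↔ s(x, y) ∈ c.edges := by
  rw [← Subgraph.mem_edgeSet, Walk.mem_edges_toSubgraph]

lemma cycle_of_induced_path {G : SimpleGraph V} {v u u' : V} (hne : u ≠ u') (hu : G.Adj v u)
    (hu' : G.Adj v u') (p : G.Walk u u') (hpath : p.IsPath)
    (hvns : v ∉ p.support)
    (hnbr : ∀ y ∈ p.support, G.Adj v y → y = u ∨ y = u')
    (hind : ∀ x y, G.Adj x y → x ∈ p.support → y ∈ p.support → s(x, y) ∈ p.edges) :
    ∃ s : Set V, IsInducedCycleOn G s ∧ v ∈ s ∧ u ∈ s ∧ u' ∈ s := by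
  set q : G.Walk u v := p.concat hu'.symm with hqdef
  set c : G.Walk v v := Walk.cons hu q with hcdef
  have hqedges : q.edges = p.edges ++ [s(u', v)] := by
    rw [hqdef, Walk.edges_concat, List.concat_eq_append]
  have hcedges : c.edges = s(v, u) :: (p.edges ++ [s(u', v)]) := by
    rw [hcdef, Walk.edges_cons, hqedges]
  have hcsupp : ∀ x, x ∈ c.support ↔ x = v ∨ x ∈ p.support := by
    intro x
    rw [hcdef, Walk.support_cons, hqdef, Walk.support_concat]
    simp only [List.mem_cons, List.mem_append, List.mem_singleton]
    tauto
  -- the cycle property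
  have hqpath : q.IsPath := by
    rw [← Walk.isPath_reverse_iff, hqdef, Walk.reverse_concat]
    exact Walk.IsPath.cons hpath.reverse (by
      rw [Walk.support_reverse, List.mem_reverse]; exact hvns)
  have hcyc : c.IsCycle := by
    rw [hcdef, Walk.cons_isCycle_iff]
    refine ⟨hqpath, fun hmem => ?_⟩
    rw [hqedges, List.mem_append, List.mem_singleton] at hmem
    rcases hmem with hmem | hmem
    · exact hvns (Walk.fst_mem_support_of_mem_edges p hmem)
    · rw [Sym2.eq_iff] at hmem
      rcases hmem with ⟨hvv, -⟩ | ⟨-, huu⟩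
      · exact hu'.ne hvv
      · exact hne huu
  -- inducedness
  have hinduced : c.toSubgraph.IsInduced := by
    intro x hx y hy hadj
    rw [Walk.mem_verts_toSubgraph, hcsupp] at hx hy
    rw [walk_toSubgraph_adj_iff, hcedges]
    simp only [List.mem_cons, List.mem_append, List.mem_singleton]
    rcases hx with rfl | hx
    · rcases hy with rfl | hy
      · exact absurd hadj G.irrefl
      · rcases hnbr y hy hadj with rfl | rfl
        · left; rfl
        · right; right; left; rw [Sym2.eq_swap]
    · rcases hy with rfl | hy
      · rcases hnbr x hx hadj.symm with rfl | rfl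
        · left; rw [Sym2.eq_swap]
        · right; right; left; rfl
      · right; left; exact hind x y hadj hx hy
  refine ⟨c.toSubgraph.verts, ⟨v, c, hcyc, hinduced, rfl⟩, ?_, ?_, ?_⟩ <;>
    rw [Walk.mem_verts_toSubgraph, hcsupp]
  · left; rfl
  · right; exact p.start_mem_support
  · right; exact p.end_mem_support



/-- `v` is avoidable within the vertex set `s`. -/
def Avoid (G : SimpleGraph V) (s : Set V) (v : V) : Prop :=
  v ∈ s ∧ ∀ u u' : V, u ∈ s → u' ∈ s → u ≠ u' → G.Adj v u → G.Adj v u' → ¬ G.Adj u u' →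
    WIn G {z | z ∈ s ∧ (z = u ∨ z = u' ∨ (z ≠ v ∧ ¬ G.Adj v z))} u u'

lemma win_component {G : SimpleGraph V} {r : Set V} {c x : V} (h : WIn G r c x) :
    WIn G {y | WIn G r c y} c x := by
  classical
  obtain ⟨p, hp⟩ := h
  exact ⟨p, fun z hz =>
    ⟨p.takeUntil z hz, fun w hw => hp w (p.support_takeUntil_subset hz hw)⟩⟩

lemma absorb {G : SimpleGraph V} {s S C : Set V} {t : V}
    (hclosed : ∀ x y, x ∈ C → G.Adj x y → y ∈ s \ S → y ∈ C)
    (hnot : ∀ x ∈ C, ¬ G.Adj t x) :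
    ∀ {x y : V} (p : G.Walk x y), (∀ z ∈ p.support, z ∈ s \ (S \ {t})) → x ∈ C → y ∈ C := by
  intro x y p
  induction p with
  | nil => exact fun _ hx => hx
  | @cons a c e h q ih =>
    intro hsupp hx
    have hc : c ∈ s \ (S \ {t}) := hsupp c (by simp)
    by_cases hct : c = t
    · subst hct; exact absurd h.symm (hnot a hx)
    · have hcC : c ∈ C := hclosed a c hx h ⟨hc.1, fun hcS => hc.2 ⟨hcS, hct⟩⟩
      exact ih (fun z hz => hsupp z (by simp [hz])) hcC

lemma convert_walk {G H : SimpleGraph V} {S tH tG : Set V}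
    (hHadj : ∀ x y, H.Adj x y → G.Adj x y ∨ (x ∈ S ∧ y ∈ S))
    (htHt : tH ⊆ tG)
    (hbridge : ∀ x y, x ∈ S → y ∈ S → x ∈ tG → y ∈ tG → WIn G tG x y) :
    ∀ {x y : V} (p : H.Walk x y), (∀ z ∈ p.support, z ∈ tH) → WIn G tG x y := by
  intro x y p
  induction p with
  | nil => exact fun h => WIn.refl (htHt (h _ (by simp)))
  | @cons x c e hadj q ihq =>
    intro hsup
    have h1 : x ∈ tH := hsup x (by simp)
    have h2 : c ∈ tH := hsup c (by simp)
    have htail : WIn G tG c e := ihq (fun z hz => hsup z (by simp [hz]))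
    rcases hHadj x c hadj with hG | ⟨hxS, hcS⟩
    · exact (WIn.of_adj hG (htHt h1) (htHt h2)).trans htail
    · exact (hbridge x c hxS hcS (htHt h1) (htHt h2)).trans htail

lemma main_avoid [Fintype V] :
    ∀ n : ℕ, ∀ (G : SimpleGraph V) (s : Set V), s.ncard ≤ n →
      ∀ a b : V, a ∈ s → b ∈ s → a ≠ b → ¬ G.Adj a b →
      ∃ v w : V, v ∈ s ∧ w ∈ s ∧ v ≠ w ∧ ¬ G.Adj v w ∧ Avoid G s v ∧ Avoid G s w := by
  intro n
  induction n with
  | zero =>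
    intro G s hcard a b ha _ _ _
    have h0 : s.ncard = 0 := Nat.le_zero.mp hcard
    rw [Set.ncard_eq_zero (Set.toFinite s)] at h0
    rw [h0] at ha
    exact absurd ha (Set.notMem_empty a)
  | succ n ih =>
    intro G s hcard a b ha hb hab hnadj
    classical
    -- a minimal separator S between a and b inside s
    set F : Set (Set V) := {S | S ⊆ s \ {a, b} ∧ ¬ WIn G (s \ S) a b} with hF
    have hF0 : (s \ {a, b}) ∈ F := by
      refine ⟨subset_rfl, fun hw => ?_⟩
      refine not_wIn_pair hab hnadj (hw.mono ?_)
      intro x hx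
      by_contra hc
      exact hx.2 ⟨hx.1, hc⟩
    have hKne : {k | ∃ S ∈ F, S.ncard = k}.Nonempty := ⟨_, _, hF0, rfl⟩
    obtain ⟨S, hSF, hScard⟩ := Nat.sInf_mem hKne
    have hSsub : S ⊆ s \ {a, b} := hSF.1
    have hSnw : ¬ WIn G (s \ S) a b := hSF.2
    have hmin : ∀ t ∈ S, WIn G (s \ (S \ {t})) a b := by
      intro t ht
      by_contra hcon
      have hFS : S \ {t} ∈ F := ⟨(Set.diff_subset).trans hSsub, hcon⟩
      have h1 : (S \ {t}).ncard ∈ {k | ∃ S ∈ F, S.ncard = k} := ⟨_, hFS, rfl⟩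
      have h2 := Nat.sInf_le h1
      have h3 : (S \ {t}).ncard < S.ncard :=
        Set.ncard_diff_singleton_lt_of_mem ht (Set.toFinite S)
      omega
    -- the key construction, applied to (a,b) and then to (b,a)
    have key : ∀ a' b' : V, a' ∈ s → b' ∈ s → S ⊆ s \ {a', b'} → ¬ WIn G (s \ S) a' b' →
        (∀ t ∈ S, WIn G (s \ (S \ {t})) a' b') →
        ∃ v : V, WIn G (s \ S) a' v ∧ Avoid G s v := by
      clear hmin hSnw hSsub hScard hSF hKne hF0 hF F hnadj hab ha hb a b
      intro a b ha hb hSsub hSnw hmin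
      set A : Set V := {x | WIn G (s \ S) a x} with hA
      set B : Set V := {x | WIn G (s \ S) b x} with hB
      have haS : a ∈ s \ S := ⟨ha, fun h => (hSsub h).2 (by simp)⟩
      have hbS : b ∈ s \ S := ⟨hb, fun h => (hSsub h).2 (by simp)⟩
      have haA : a ∈ A := WIn.refl haS
      have hbB : b ∈ B := WIn.refl hbS
      have hAsub : A ⊆ s \ S := fun x hx => hx.mem_right
      have hBsub : B ⊆ s \ S := fun x hx => hx.mem_right
      have hdis : ∀ x, x ∈ A → x ∈ B → False := fun x hxA hxB => hSnw (hxA.trans hxB.symm)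
      have hclosedA : ∀ x y, x ∈ A → G.Adj x y → y ∈ s \ S → y ∈ A :=
        fun x y hx hxy hy => hx.trans (WIn.of_adj hxy hx.mem_right hy)
      have hclosedB : ∀ x y, x ∈ B → G.Adj x y → y ∈ s \ S → y ∈ B :=
        fun x y hx hxy hy => hx.trans (WIn.of_adj hxy hx.mem_right hy)
      have hnbrA : ∀ t ∈ S, ∃ x ∈ A, G.Adj t x := by
        intro t ht
        by_contra hcon
        push_neg at hcon
        obtain ⟨p, hp⟩ := hmin t ht
        exact hdis b (absorb hclosedA hcon p hp haA) hbB
      have hnbrB : ∀ t ∈ S, ∃ x ∈ B, G.Adj t x := by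
        intro t ht
        by_contra hcon
        push_neg at hcon
        obtain ⟨p, hp⟩ := hmin t ht
        refine hdis a haA (absorb hclosedB hcon p.reverse ?_ hbB)
        intro z hz
        rw [Walk.support_reverse, List.mem_reverse] at hz
        exact hp z hz
      -- the graph with S completed
      set H : SimpleGraph V := G ⊔ SimpleGraph.fromRel (fun x y => x ∈ S ∧ y ∈ S) with hHdef
      have hHadj : ∀ x y, H.Adj x y ↔ G.Adj x y ∨ (x ≠ y ∧ x ∈ S ∧ y ∈ S) := by
        intro x y
        rw [hHdef, sup_adj, fromRel_adj]
        tauto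
      have hGH : ∀ x y, G.Adj x y → H.Adj x y := fun x y h => (hHadj x y).mpr (Or.inl h)
      set sA : Set V := A ∪ S with hsA
      have hsAs : sA ⊆ s := by
        intro x hx
        rcases hx with hx | hx
        · exact (hAsub hx).1
        · exact (hSsub hx).1
      have hbnotin : b ∉ sA := by
        rintro (hbA | hbS')
        · exact hdis b hbA hbB
        · exact (hSsub hbS').2 (by simp)
      have hcardA : sA.ncard ≤ n := by
        have hlt : sA.ncard < s.ncard :=
          Set.ncard_lt_ncard ⟨hsAs, fun hss => hbnotin (hss hb)⟩ (Set.toFinite s)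
        omega
      -- obtain an Avoid vertex of H on sA lying in A
      have hstep : ∃ v, v ∈ A ∧ Avoid H sA v := by
        by_cases hcomp : ∀ x y, x ∈ sA → y ∈ sA → x ≠ y → H.Adj x y
        · exact ⟨a, haA, Or.inl haA,
            fun u u' hu hu' hne h1 h2 h3 => absurd (hcomp u u' hu hu' hne) h3⟩
        · push_neg at hcomp
          obtain ⟨x, y, hx, hy, hxy, hnxy⟩ := hcomp
          obtain ⟨v, w, hvA, hwA, hvw, hnvw, havv, havw⟩ := ih H sA hcardA x y hx hy hxy hnxy
          have hnotboth : v ∉ S ∨ w ∉ S := by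
            by_contra hc
            push_neg at hc
            exact hnvw ((hHadj v w).mpr (Or.inr ⟨hvw, hc.1, hc.2⟩))
          rcases hnotboth with hvS | hwS
          · exact ⟨v, hvA.resolve_right hvS, havv⟩
          · exact ⟨w, hwA.resolve_right hwS, havw⟩
      obtain ⟨v, hvA, hvmem, havoid⟩ := hstep
      refine ⟨v, hvA, (hAsub hvA).1, ?_⟩
      -- lift avoidability from (H, sA) to (G, s)
      intro u u' hu hu' hne hadju hadju' hnadjuu
      have huA : u ∈ sA := by
        by_cases h : u ∈ S
        · exact Or.inr h
        · exact Or.inl (hclosedA v u hvA hadju ⟨hu, h⟩)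
      have hu'A : u' ∈ sA := by
        by_cases h : u' ∈ S
        · exact Or.inr h
        · exact Or.inl (hclosedA v u' hvA hadju' ⟨hu', h⟩)
      set tG : Set V := {z | z ∈ s ∧ (z = u ∨ z = u' ∨ (z ≠ v ∧ ¬ G.Adj v z))} with htG
      have hBfact : ∀ z ∈ B, z ≠ v ∧ ¬ G.Adj v z := by
        intro z hz
        constructor
        · rintro rfl; exact hdis z hvA hz
        · intro hadj
          exact hdis z (hclosedA v z hvA hadj (hBsub hz)) hz
      have hBt : B ⊆ tG := fun z hz =>
        ⟨(hBsub hz).1, Or.inr (Or.inr (hBfact z hz))⟩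
      have hcompB : ∀ x ∈ B, WIn G B b x := fun x hx => win_component hx
      have hbridge : ∀ x y, x ∈ S → y ∈ S → x ∈ tG → y ∈ tG → WIn G tG x y := by
        intro x y hxS hyS hxt hyt
        obtain ⟨px, hpxB, hadjx⟩ := hnbrB x hxS
        obtain ⟨py, hpyB, hadjy⟩ := hnbrB y hyS
        have h1 : WIn G tG x px := WIn.of_adj hadjx hxt (hBt hpxB)
        have h2 : WIn G tG px py :=
          (((hcompB px hpxB).symm.trans (hcompB py hpyB)).mono hBt)
        have h3 : WIn G tG py y := WIn.of_adj hadjy.symm (hBt hpyB) hyt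
        exact (h1.trans h2).trans h3
      by_cases hSS : u ∈ S ∧ u' ∈ S
      · exact hbridge u u' hSS.1 hSS.2 ⟨hu, Or.inl rfl⟩ ⟨hu', Or.inr (Or.inl rfl)⟩
      · have hnadjH : ¬ H.Adj u u' := by
          rw [hHadj]
          rintro (h | ⟨-, h1, h2⟩)
          · exact hnadjuu h
          · exact hSS ⟨h1, h2⟩
        have hwH := havoid u u' huA hu'A hne (hGH _ _ hadju) (hGH _ _ hadju') hnadjH
        set tH : Set V := {z | z ∈ sA ∧ (z = u ∨ z = u' ∨ (z ≠ v ∧ ¬ H.Adj v z))} with htH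
        have htHt : tH ⊆ tG := by
          rintro z ⟨hz1, hz2⟩
          refine ⟨hsAs hz1, ?_⟩
          rcases hz2 with h | h | ⟨h1, h2⟩
          · exact Or.inl h
          · exact Or.inr (Or.inl h)
          · exact Or.inr (Or.inr ⟨h1, fun hg => h2 (hGH _ _ hg)⟩)
        obtain ⟨p, hp⟩ := hwH
        exact convert_walk (fun x y h => ((hHadj x y).mp h).imp id (fun h' => ⟨h'.2.1, h'.2.2⟩))
          htHt hbridge p hp
    -- apply key to both sides
    obtain ⟨v, hvwin, hvavoid⟩ := key a b ha hb hSsub hSnw hmin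
    have hpair : s \ {b, a} = s \ {a, b} := by rw [Set.pair_comm]
    obtain ⟨w, hwwin, hwavoid⟩ := key b a hb ha (hpair ▸ hSsub)
      (fun h => hSnw h.symm) (fun t ht => (hmin t ht).symm)
    refine ⟨v, w, hvwin.mem_right.1, hwwin.mem_right.1, ?_, ?_, hvavoid, hwavoid⟩
    · rintro rfl
      exact hSnw (hvwin.trans hwwin.symm)
    · intro hadj
      exact hSnw ((hvwin.trans (WIn.of_adj hadj hvwin.mem_right hwwin.mem_right)).trans
        hwwin.symm)


lemma isGood_of_avoid {G : SimpleGraph V} {v : V} (h : Avoid G Set.univ v) : IsGood G v := by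
  intro u u' hne hu hu' huu'
  have hw := h.2 u u' (Set.mem_univ u) (Set.mem_univ u') hne hu hu' huu'
  obtain ⟨p, hpt, hpath, hind⟩ := exists_induced_path hw
  refine cycle_of_induced_path hne hu hu' p hpath ?_ ?_ hind
  · intro hv
    rcases (hpt v hv).2 with rfl | rfl | ⟨h3, -⟩
    · exact G.irrefl hu
    · exact G.irrefl hu'
    · exact h3 rfl
  · intro y hy hadj
    rcases (hpt y hy).2 with rfl | rfl | ⟨-, hno⟩
    · exact Or.inl rfl
    · exact Or.inr rfl
    · exact absurd hadj hno

/-- Every non-complete finite simple graph contains two non-adjacent good vertices. -/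
theorem exists_two_nonadjacent_good_vertices [Fintype V] (G : SimpleGraph V)
    (hnc : ∃ u w : V, u ≠ w ∧ ¬ G.Adj u w) :
    ∃ v w : V, v ≠ w ∧ ¬ G.Adj v w ∧ IsGood G v ∧ IsGood G w := by
  obtain ⟨a, b, hab, hnadj⟩ := hnc
  obtain ⟨v, w, -, -, hvw, hnvw, hv, hw⟩ :=
    main_avoid (Set.univ : Set V).ncard G Set.univ le_rfl a b (Set.mem_univ a)
      (Set.mem_univ b) hab hnadj
  exact ⟨v, w, hvw, hnvw, isGood_of_avoid hv, isGood_of_avoid hw⟩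

end CompKim
end

section
/- If v is a good vertex of a finite simple graph G, then dim(H(G)) ≥ dim(H(G - v)) + defect(v), where H denotes the hole space. -/
namespace CompKim

open SimpleGraph

variable {V : Type*}

/-- A hole is an induced cycle on at least 4 vertices. -/
def IsHole (G : SimpleGraph V) (s : Set V) : Prop :=
  IsInducedCycleOn G s ∧ 4 ≤ s.ncard

/-- The number of holes of `G`. -/
noncomputable def holeCount (G : SimpleGraph V) : ℕ := {s : Set V | IsHole G s}.ncard

/-- The number of holes of `G` containing `v`. -/
noncomputable def holeCountAt (G : SimpleGraph V) (v : V) : ℕ :=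
  {s : Set V | IsHole G s ∧ v ∈ s}.ncard

/-- The clique number of the subgraph of `G` induced on the neighborhood of `v`. -/
noncomputable def neighborCliqueNumber (G : SimpleGraph V) (v : V) : ℕ :=
  sSup {n | ∃ s : Finset V, G.IsNClique n s ∧ ↑s ⊆ G.neighborSet v}

/-- The simplicial defect of a vertex: `|N(v)| - ω(G[N(v)])`. -/
noncomputable def defect (G : SimpleGraph V) (v : V) : ℕ :=
  (G.neighborSet v).ncard - neighborCliqueNumber G v

/-- The characteristic vector (over `𝔽₂`) of the edge set of the hole `s` (the edges of
`G` with both endpoints in `s`), as an element of the cycle space. -/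
noncomputable def holeEdgeVector (G : SimpleGraph V) (s : Set V) : Sym2 V → ZMod 2 :=
  Set.indicator {e | e ∈ G.edgeSet ∧ ∀ x ∈ e, x ∈ s} 1

/-- The hole space: the `𝔽₂`-span of the edge sets of all holes. -/
noncomputable def holeSpace (G : SimpleGraph V) : Submodule (ZMod 2) (Sym2 V → ZMod 2) :=
  Submodule.span (ZMod 2) {x | ∃ s : Set V, IsHole G s ∧ x = holeEdgeVector G s}

/-! ### Auxiliary lemmas about cycles -/

variable {G : SimpleGraph V}

lemma getVert_eq_support_getElem {u v : V} (p : G.Walk u v) {i : ℕ} (h : i ≤ p.length) :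
    p.getVert i = p.support[i]'(by rw [SimpleGraph.Walk.length_support]; omega) := by
  induction p generalizing i with
  | nil => simp at h; subst h; simp
  | cons ha q ih =>
    cases i with
    | zero => simp
    | succ n =>
      simp only [SimpleGraph.Walk.getVert_cons_succ, SimpleGraph.Walk.support_cons,
        List.getElem_cons_succ]
      exact ih (by simpa using h)

lemma cycle_getVert_inj {x : V} {c : G.Walk x x} (hc : c.IsCycle) {i j : ℕ}
    (hi1 : 1 ≤ i) (hi2 : i ≤ c.length) (hj1 : 1 ≤ j) (hj2 : j ≤ c.length)
    (hij : c.getVert i = c.getVert j) : i = j := by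
  have hts := hc.support_nodup
  have hlen : c.support.tail.length = c.length := by
    have := SimpleGraph.Walk.length_support c
    have h2 := c.support_eq_cons
    rw [h2] at this
    simpa using this
  have key : ∀ k : ℕ, ∀ (hk1 : 1 ≤ k) (hk2 : k ≤ c.length),
      c.getVert k = c.support.tail[k-1]'(by omega) := by
    intro k hk1 hk2
    rw [getVert_eq_support_getElem c hk2]
    have h1 : k - 1 < c.support.tail.length := by omega
    rw [List.getElem_tail]
    have : k - 1 + 1 = k := by omega
    simp only [this]
  rw [key i hi1 hi2, key j hj1 hj2] at hij
  have := (hts.getElem_inj_iff (i := i - 1) (hi := by omega) (j := j - 1) (hj := by omega)).mp hij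
  omega

lemma cycle_getVert_eq_start {x : V} {c : G.Walk x x} (hc : c.IsCycle) {i : ℕ}
    (hi : i ≤ c.length) (h : c.getVert i = x) : i = 0 ∨ i = c.length := by
  rcases Nat.eq_zero_or_pos i with h0 | h0
  · exact Or.inl h0
  · right
    have h3 := hc.three_le_length
    exact cycle_getVert_inj hc h0 hi (by omega) le_rfl (by rw [h, SimpleGraph.Walk.getVert_length])

/-- In a cycle, the start vertex has exactly two neighbors in the walk subgraph. -/
lemma cycle_two_neighbors_start {x : V} {c : G.Walk x x} (hc : c.IsCycle) :
    ∃ a b : V, a ≠ b ∧ c.toSubgraph.Adj x a ∧ c.toSubgraph.Adj x b ∧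
      ∀ y, c.toSubgraph.Adj x y → y = a ∨ y = b := by
  have h3 := hc.three_le_length
  refine ⟨c.getVert 1, c.getVert (c.length - 1), ?_, ?_, ?_, ?_⟩
  · intro h
    have := cycle_getVert_inj hc le_rfl (by omega) (by omega) (by omega) h
    omega
  · have := c.toSubgraph_adj_getVert (i := 0) (by omega)
    simpa using this
  · have := c.toSubgraph_adj_getVert (i := c.length - 1) (by omega)
    have h1 : c.length - 1 + 1 = c.length := by omega
    rw [h1, SimpleGraph.Walk.getVert_length] at this
    exact this.symm
  · intro y hy
    rw [SimpleGraph.Walk.toSubgraph_adj_iff] at hy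
    obtain ⟨i, hi, hilen⟩ := hy
    rw [Sym2.eq_iff] at hi
    rcases hi with ⟨hix, hiy⟩ | ⟨hiy, hix⟩
    · rcases cycle_getVert_eq_start hc (le_of_lt hilen) hix with h0 | h0
      · subst h0; exact Or.inl hiy.symm
      · omega
    · have : i + 1 = 0 ∨ i + 1 = c.length :=
        cycle_getVert_eq_start hc (by omega) hix
      have h0 : i = c.length - 1 := by omega
      subst h0; exact Or.inr hiy.symm

/-- In a cycle, every support vertex has exactly two neighbors in the walk subgraph. -/
lemma cycle_two_neighbors {x w : V} {c : G.Walk x x} (hc : c.IsCycle)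
    (hw : w ∈ c.support) :
    ∃ a b : V, a ≠ b ∧ c.toSubgraph.Adj w a ∧ c.toSubgraph.Adj w b ∧
      ∀ y, c.toSubgraph.Adj w y → y = a ∨ y = b := by
  classical
  have hrot := hc.rotate hw
  have hts := SimpleGraph.Walk.toSubgraph_rotate c hw
  obtain ⟨a, b, hab, h1, h2, h3⟩ := cycle_two_neighbors_start hrot
  rw [hts] at h1 h2 h3
  exact ⟨a, b, hab, h1, h2, h3⟩

/-- Transport an induced cycle of an induced subgraph to the ambient graph. -/
lemma isInducedCycleOn_map {s₀ : Set V} {s : Set ↥s₀}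
    (h : IsInducedCycleOn (G.induce s₀) s) :
    IsInducedCycleOn G (Subtype.val '' s) := by
  obtain ⟨x, c, hc, hind, hverts⟩ := h
  let f : G.induce s₀ →g G := (SimpleGraph.Embedding.induce s₀).toHom
  have hfinj : Function.Injective f := Subtype.val_injective
  refine ⟨f x, c.map f, hc.map hfinj, ?_, ?_⟩
  · rw [SimpleGraph.Walk.toSubgraph_map]
    intro a ha b hb hadj
    simp only [SimpleGraph.Subgraph.map_verts] at ha hb
    obtain ⟨a₀, ha₀, rfl⟩ := ha
    obtain ⟨b₀, hb₀, rfl⟩ := hb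
    have : (G.induce s₀).Adj a₀ b₀ := hadj
    exact ⟨a₀, b₀, hind ha₀ hb₀ this, rfl, rfl⟩
  · rw [SimpleGraph.Walk.toSubgraph_map]
    simp only [SimpleGraph.Subgraph.map_verts, hverts]
    rfl

lemma isHole_map {s₀ : Set V} {s : Set ↥s₀} (h : IsHole (G.induce s₀) s) :
    IsHole G (Subtype.val '' s) :=
  ⟨isInducedCycleOn_map h.1, by
    rw [Set.ncard_image_of_injective s Subtype.val_injective]; exact h.2⟩

/-- There is a maximum clique in the neighborhood of `v`. -/
lemma exists_max_clique [Fintype V] (G : SimpleGraph V) (v : V) :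
    ∃ K : Finset V, G.IsNClique (neighborCliqueNumber G v) K ∧
      ↑K ⊆ G.neighborSet v ∧
      ∀ u ∈ G.neighborSet v, u ∉ K → ∃ u' ∈ K, u ≠ u' ∧ ¬ G.Adj u u' := by
  classical
  set A := {n | ∃ s : Finset V, G.IsNClique n s ∧ ↑s ⊆ G.neighborSet v} with hA
  have hne : A.Nonempty := ⟨0, ∅, by simp [SimpleGraph.isNClique_empty], by simp⟩
  have hbdd : BddAbove A := by
    refine ⟨Fintype.card V, ?_⟩
    rintro n ⟨s, hs, -⟩
    rw [← hs.2]
    exact Finset.card_le_card (Finset.subset_univ s) |>.trans (by simp)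
  have hmem : neighborCliqueNumber G v ∈ A := Nat.sSup_mem hne hbdd
  obtain ⟨K, hK, hKsub⟩ := hmem
  refine ⟨K, hK, hKsub, ?_⟩
  intro u hu huK
  by_contra hcon
  push_neg at hcon
  have hadj : ∀ u' ∈ K, G.Adj u u' := by
    intro u' hu'
    rcases eq_or_ne u u' with rfl | hne'
    · exact absurd hu' huK
    · exact hcon u' hu' hne'
  have hclique : G.IsNClique (neighborCliqueNumber G v + 1) (insert u K) := by
    constructor
    · rw [Finset.coe_insert]
      exact hK.1.insert fun b hb _ => hadj b hb
    · rw [Finset.card_insert_of_notMem huK, hK.2]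
  have hmem' : neighborCliqueNumber G v + 1 ∈ A := by
    refine ⟨insert u K, hclique, ?_⟩
    rw [Finset.coe_insert]
    exact Set.insert_subset hu hKsub
  have h2 : neighborCliqueNumber G v + 1 ≤ neighborCliqueNumber G v := le_csSup hbdd hmem'
  omega

/-- An induced cycle through `v` and two non-adjacent neighbors has at least 4 vertices. -/
lemma four_le_ncard_of_good [Fintype V] {s : Set V} {v u u' : V}
    (hcyc : IsInducedCycleOn G s) (hvs : v ∈ s) (hus : u ∈ s) (hu's : u' ∈ s)
    (hvu : G.Adj v u) (hvu' : G.Adj v u') (huu' : u ≠ u') (hnadj : ¬ G.Adj u u') :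
    4 ≤ s.ncard := by
  obtain ⟨x, c, hc, hind, hverts⟩ := hcyc
  have hsup : u ∈ c.support := by
    rw [← SimpleGraph.Walk.mem_verts_toSubgraph, hverts]; exact hus
  obtain ⟨a, b, hab, h1, h2, h3⟩ := cycle_two_neighbors hc hsup
  have ha_mem : a ∈ s := by rw [← hverts]; exact h1.snd_mem
  have hb_mem : b ∈ s := by rw [← hverts]; exact h2.snd_mem
  have ha_ne_u : a ≠ u := by
    intro h; subst h; exact (c.toSubgraph.adj_sub h1).ne rfl
  have hb_ne_u : b ≠ u := by
    intro h; subst h; exact (c.toSubgraph.adj_sub h2).ne rfl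
  have hnadj' : ∀ y, c.toSubgraph.Adj u y → y ≠ u' := by
    intro y hy hyu'
    exact hnadj (hyu' ▸ c.toSubgraph.adj_sub hy)
  have ha_ne : a ≠ u' := hnadj' a h1
  have hb_ne : b ≠ u' := hnadj' b h2
  have hwex : ∃ w, w ∈ s ∧ w ≠ v ∧ w ≠ u ∧ w ≠ u' := by
    rcases eq_or_ne a v with h | hav
    · rcases eq_or_ne b v with h' | hbv
      · exact absurd (h.trans h'.symm) hab
      · exact ⟨b, hb_mem, hbv, hb_ne_u, hb_ne⟩
    · exact ⟨a, ha_mem, hav, ha_ne_u, ha_ne⟩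
  obtain ⟨w, hw_mem, hwv, hwu, hwu'⟩ := hwex
  have hsub : ({v, u, u', w} : Set V) ⊆ s := by
    intro y hy
    simp only [Set.mem_insert_iff, Set.mem_singleton_iff] at hy
    rcases hy with rfl | rfl | rfl | rfl <;> assumption
  have hcard : ({v, u, u', w} : Set V).ncard = 4 := by
    rw [Set.ncard_insert_of_notMem (by simp [hvu.ne, hvu'.ne, Ne.symm hwv]),
      Set.ncard_insert_of_notMem (by simp [huu', Ne.symm hwu]),
      Set.ncard_insert_of_notMem (by simp [Ne.symm hwu']),
      Set.ncard_singleton]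
  calc 4 = ({v, u, u', w} : Set V).ncard := hcard.symm
    _ ≤ s.ncard := Set.ncard_le_ncard hsub (Set.toFinite s)

/-- The only neighbors of `v` inside the induced cycle through `v, u, u'` are `u` and `u'`. -/
lemma adj_center_cases {s : Set V} {v u u' : V}
    (hcyc : IsInducedCycleOn G s) (hvs : v ∈ s) (hus : u ∈ s) (hu's : u' ∈ s)
    (hvu : G.Adj v u) (hvu' : G.Adj v u') (huu' : u ≠ u') :
    ∀ w ∈ s, G.Adj v w → w = u ∨ w = u' := by
  obtain ⟨x, c, hc, hind, hverts⟩ := hcyc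
  rw [← hverts] at hvs hus hu's
  have hsup : v ∈ c.support := by
    rw [← SimpleGraph.Walk.mem_verts_toSubgraph]; exact hvs
  obtain ⟨a, b, hab, -, -, h3⟩ := cycle_two_neighbors hc hsup
  have hu_ab := h3 u (hind hvs hus hvu)
  have hu'_ab := h3 u' (hind hvs hu's hvu')
  intro w hw hadjw
  rw [← hverts] at hw
  have hw_ab := h3 w (hind hvs hw hadjw)
  rcases hu_ab with h | h <;> rcases hu'_ab with h' | h' <;>
    rcases hw_ab with h'' | h'' <;> simp_all

/-! ### Edge vector computations -/

lemma hev_apply (G : SimpleGraph V) (s' : Set V) (e : Sym2 V) [Decidable (e ∈ G.edgeSet ∧ ∀ x ∈ e, x ∈ s')] :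
    holeEdgeVector G s' e = if e ∈ G.edgeSet ∧ ∀ x ∈ e, x ∈ s' then 1 else 0 := by
  classical
  rw [holeEdgeVector, Set.indicator_apply]
  split_ifs with h1 h2 h3 <;> first | rfl | (exact absurd h1 h2) | (exact absurd h3 h1)

lemma hev_restrict (G : SimpleGraph V) (s₀ : Set V) (s : Set ↥s₀) (e : Sym2 ↥s₀) :
    holeEdgeVector G (Subtype.val '' s) (Sym2.map Subtype.val e) =
      holeEdgeVector (G.induce s₀) s e := by
  classical
  induction e using Sym2.ind with
  | _ a b =>
    rw [Sym2.map_pair_eq, hev_apply, hev_apply]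
    refine if_congr ?_ rfl rfl
    simp only [SimpleGraph.mem_edgeSet, Sym2.mem_iff, forall_eq_or_imp, forall_eq,
      SimpleGraph.comap_adj, Function.Embedding.coe_subtype,
      Subtype.val_injective.mem_set_image]

lemma hev_zero_of_not_mem (G : SimpleGraph V) {s' : Set V} {v u : V} (hv : v ∉ s') :
    holeEdgeVector G s' s(v, u) = 0 := by
  classical
  rw [hev_apply, if_neg]
  rintro ⟨-, h⟩
  exact hv (h v (by simp))

lemma hev_one_of_mem (G : SimpleGraph V) {s' : Set V} {v u : V} (hadj : G.Adj v u)
    (hvmem : v ∈ s') (humem : u ∈ s') : holeEdgeVector G s' s(v, u) = 1 := by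
  classical
  rw [hev_apply, if_pos]
  refine ⟨hadj, ?_⟩
  intro x hx
  rw [Sym2.mem_iff] at hx
  rcases hx with rfl | rfl <;> assumption

set_option maxHeartbeats 1000000 in
set_option synthInstance.maxHeartbeats 400000 in
/-- For a good vertex `v`, `dim H(G) ≥ dim H(G - v)`. -/
theorem holeSpace_dim_ge [Fintype V] (G : SimpleGraph V) (v : V) (hv : IsGood G v) :
    Module.finrank (ZMod 2) (holeSpace (G.induce {u : V | u ≠ v})) + defect G v ≤
      Module.finrank (ZMod 2) (holeSpace G) := by
  classical
  set s₀ : Set V := {u : V | u ≠ v} with hs₀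
  obtain ⟨K, hK, hKsub, hKmax⟩ := exists_max_clique G v
  set D : Set V := G.neighborSet v \ ↑K with hD
  -- choose a hole through `v` and each vertex of `D`
  have hchoice : ∀ u : ↥D, ∃ s : Set V, IsHole G s ∧ v ∈ s ∧ ↑u ∈ s ∧
      (∀ w ∈ s, G.Adj v w → w = ↑u ∨ w ∈ (K : Set V)) := by
    rintro ⟨u, hu⟩
    obtain ⟨hu1, hu2⟩ := hu
    obtain ⟨u', hu'K, hne, hnadj⟩ := hKmax u hu1 hu2
    obtain ⟨s, hcyc, hvs, hus, hu's⟩ := hv u u' hne hu1 (hKsub hu'K) hnadj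
    refine ⟨s, ⟨hcyc, four_le_ncard_of_good hcyc hvs hus hu's hu1 (hKsub hu'K) hne hnadj⟩,
      hvs, hus, ?_⟩
    intro w hw hadjw
    rcases adj_center_cases hcyc hvs hus hu's hu1 (hKsub hu'K) hne w hw hadjw with h | h
    · exact Or.inl h
    · exact Or.inr (h ▸ hu'K)
  choose S hS1 hS2 hS3 hS4 using hchoice
  -- the two linear functionals
  let R : (Sym2 V → ZMod 2) →ₗ[ZMod 2] (Sym2 ↥s₀ → ZMod 2) :=
    LinearMap.funLeft (ZMod 2) (ZMod 2) (Sym2.map Subtype.val)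
  let Q : (Sym2 V → ZMod 2) →ₗ[ZMod 2] (↥D → ZMod 2) :=
    LinearMap.funLeft (ZMod 2) (ZMod 2) (fun u : ↥D => s(v, ↑u))
  let ψ := R.prod Q
  set W := holeSpace (G.induce s₀) with hW
  set H := holeSpace G with hH
  let j : (Sym2 ↥s₀ → ZMod 2) →ₗ[ZMod 2] (Sym2 ↥s₀ → ZMod 2) × (↥D → ZMod 2) :=
    LinearMap.inl (ZMod 2) _ _
  let b : ↥D → (Sym2 ↥s₀ → ZMod 2) × (↥D → ZMod 2) := fun u => ψ (holeEdgeVector G (S u))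
  set Sm := (W.map j) ⊔ Submodule.span (ZMod 2) (Set.range b) with hSm
  -- computations of ψ on generators
  have hψW : ∀ s : Set ↥s₀, IsHole (G.induce s₀) s →
      ψ (holeEdgeVector G (Subtype.val '' s)) = j (holeEdgeVector (G.induce s₀) s) := by
    intro s hs
    have hfst : R (holeEdgeVector G (Subtype.val '' s)) = holeEdgeVector (G.induce s₀) s := by
      funext e
      exact hev_restrict G s₀ s e
    have hsnd : Q (holeEdgeVector G (Subtype.val '' s)) = 0 := by
      funext u
      have hvnot : v ∉ Subtype.val '' s := by
        rintro ⟨y, -, hy⟩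
        exact y.2 hy
      exact hev_zero_of_not_mem G hvnot
    have hψ_eq : ψ (holeEdgeVector G (Subtype.val '' s)) =
        (R (holeEdgeVector G (Subtype.val '' s)), Q (holeEdgeVector G (Subtype.val '' s))) := rfl
    have hj_eq : j (holeEdgeVector (G.induce s₀) s) = (holeEdgeVector (G.induce s₀) s, 0) := rfl
    rw [hψ_eq, hj_eq, hfst, hsnd]
  have hψb : ∀ u : ↥D, Q (holeEdgeVector G (S u)) = Pi.single u 1 := by
    intro u
    funext u''
    have hQ : Q (holeEdgeVector G (S u)) u'' = holeEdgeVector G (S u) s(v, ↑u'') := rfl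
    rw [hQ]
    rcases eq_or_ne u'' u with rfl | hne
    · rw [Pi.single_eq_same]
      exact hev_one_of_mem G (u''.2.1) (hS2 u'') (hS3 u'')
    · rw [Pi.single_eq_of_ne hne]
      by_cases hmem : (↑u'' : V) ∈ S u
      · -- u'' would be a neighbor of v on the hole, hence u'' = u or u'' ∈ K; both impossible
        exfalso
        rcases hS4 u ↑u'' hmem (u''.2.1) with h | h
        · exact hne (Subtype.ext h)
        · exact u''.2.2 h
      · classical
        rw [hev_apply, if_neg]
        rintro ⟨-, h⟩
        exact hmem (h ↑u'' (by simp))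
  -- Sm is contained in the image of the hole space
  have hle : Sm ≤ H.map ψ := by
    rw [hSm]
    refine sup_le ?_ ?_
    · rw [hW, holeSpace, Submodule.map_span]
      refine Submodule.span_le.mpr ?_
      rintro y ⟨g, ⟨s, hs, rfl⟩, rfl⟩
      exact ⟨holeEdgeVector G (Subtype.val '' s),
        Submodule.subset_span ⟨Subtype.val '' s, isHole_map hs, rfl⟩, hψW s hs⟩
    · refine Submodule.span_le.mpr ?_
      rintro y ⟨u, rfl⟩
      exact ⟨holeEdgeVector G (S u), Submodule.subset_span ⟨S u, hS1 u, rfl⟩, rfl⟩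
  -- rank computations
  haveI : Fintype ↥s₀ := Fintype.ofFinite _
  haveI : Fintype ↥D := Fintype.ofFinite _
  haveI : Fintype (Sym2 V) := Fintype.ofFinite _
  haveI : Fintype (Sym2 ↥s₀) := Fintype.ofFinite _
  have hdefect : Fintype.card ↥D = defect G v := by
    rw [← Nat.card_eq_fintype_card, Nat.card_coe_set_eq, hD,
      Set.ncard_diff hKsub (Set.toFinite _), Set.ncard_coe_finset, hK.2, defect]
  -- the projection to the second factor, restricted to Sm
  let f : ↥Sm →ₗ[ZMod 2] (↥D → ZMod 2) :=
    (LinearMap.snd (ZMod 2) _ _).comp Sm.subtype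
  have hrange : LinearMap.range f = ⊤ := by
    rw [← top_le_iff, ← (Pi.basisFun (ZMod 2) ↥D).span_eq]
    refine Submodule.span_le.mpr ?_
    rintro y ⟨u, rfl⟩
    have hmem : b u ∈ Sm := by
      rw [hSm]
      exact Submodule.mem_sup_right (Submodule.subset_span ⟨u, rfl⟩)
    refine ⟨⟨b u, hmem⟩, ?_⟩
    show (b u).2 = Pi.basisFun (ZMod 2) ↥D u
    rw [Pi.basisFun_apply]
    exact hψb u
  have hkerW : Module.finrank (ZMod 2) W ≤ Module.finrank (ZMod 2) (LinearMap.ker f) := by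
    have hjle : W.map j ≤ Sm := by rw [hSm]; exact le_sup_left
    have hcle : (W.map j).comap Sm.subtype ≤ LinearMap.ker f := by
      rintro ⟨x, hx⟩ hmem
      simp only [Submodule.mem_comap, Submodule.coe_subtype] at hmem
      obtain ⟨w, hw, hwx⟩ := hmem
      have : x.2 = 0 := by rw [← hwx]; rfl
      show f ⟨x, hx⟩ = 0
      simpa [f] using this
    calc Module.finrank (ZMod 2) W
        = Module.finrank (ZMod 2) (W.map j) :=
          (Submodule.equivMapOfInjective j LinearMap.inl_injective W).finrank_eq
      _ = Module.finrank (ZMod 2) ((W.map j).comap Sm.subtype) :=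
          (Submodule.comapSubtypeEquivOfLe hjle).finrank_eq.symm
      _ ≤ Module.finrank (ZMod 2) (LinearMap.ker f) := Submodule.finrank_mono hcle
  have hrn := LinearMap.finrank_range_add_finrank_ker f
  rw [hrange] at hrn
  have hrtop : Module.finrank (ZMod 2) (⊤ : Submodule (ZMod 2) (↥D → ZMod 2)) = defect G v := by
    rw [finrank_top, Module.finrank_fintype_fun_eq_card, hdefect]
  have hSmrank : Module.finrank (ZMod 2) W + defect G v ≤ Module.finrank (ZMod 2) Sm := by
    rw [← hrn, ← hrtop]
    omega
  calc Module.finrank (ZMod 2) W + defect G v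
      ≤ Module.finrank (ZMod 2) Sm := hSmrank
    _ ≤ Module.finrank (ZMod 2) (H.map ψ) := Submodule.finrank_mono hle
    _ ≤ Module.finrank (ZMod 2) H := Submodule.finrank_map_le ψ H

end CompKim
end
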